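/- arXiv:1004.4141 — 3 statements merged into one kernel-verified Lean document; each statement's English description precedes it below -/
import Mathlib

section
/- Let λ > 0 and let u ∈ C²[0,m] satisfy h(s) = u(s) − λ((d(s)u'(s))' − (γ(s)u(s))' − μ(s)u(s) − ωu(s)) on (0,m). Multiplying by the sign of the positive part and integrating, one obtains ‖u⁺‖₁ ≤ λ(sgn(u⁺(m))d(m)u'(m) − sgn(u⁺(0))d(0)u'(0)) − λ(sgn(u⁺(m))γ(m)u(m) − sgn(u⁺(0))γ(0)u(0)) − λ∫₀ᵐ χ_{u⁺}(s)μ(s)u(s) ds − λω‖u⁺‖₁ + ∫₀ᵐ χ_{u⁺}(s)h(s) ds, where χ_{u⁺} is the indicator of the set {u > 0}. -/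
/-!
Write `χ` for the indicator of `{u > 0}` and `v = d u' - γ u` for the flux. Everything reduces to
`∫₀ᵐ χ v' ≤ χ(m) v(m) - χ(0) v(0)`. To prove it, replace `χ` by the smooth monotone approximations
`T(n u)`, `T` the smooth transition from `0` to `1`, and integrate by parts: the new bulk term is
`T'(n u) n u' v = T'(n u) n d u'² - T'(n u) (n u) γ u'`, whose first part is nonnegative because
`d ≥ 0`, while `T'(x) x` is bounded and vanishes outside `(0, 1]`, so the second part tends to `0`
by dominated convergence.
-/

open MeasureTheory intervalIntegral Filter Topology Real

namespace Real.smoothTransition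

lemma deriv_nonneg (x : ℝ) : 0 ≤ deriv smoothTransition x :=
  smoothTransition.monotone.deriv_nonneg

lemma abs_le_one (x : ℝ) : |smoothTransition x| ≤ 1 :=
  abs_le.2 ⟨(neg_nonpos.2 zero_le_one).trans (nonneg x), le_one x⟩

lemma continuous_deriv : Continuous (deriv smoothTransition) :=
  (smoothTransition.contDiff (n := 1)).continuous_deriv le_rfl

lemma deriv_of_neg {x : ℝ} (hx : x < 0) : deriv smoothTransition x = 0 := by
  have h : smoothTransition =ᶠ[𝓝 x] fun _ => 0 := by
    filter_upwards [Iio_mem_nhds hx] with y hy using zero_of_nonpos hy.le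
  rw [h.deriv_eq, deriv_const]

lemma deriv_of_one_lt {x : ℝ} (hx : 1 < x) : deriv smoothTransition x = 0 := by
  have h : smoothTransition =ᶠ[𝓝 x] fun _ => 1 := by
    filter_upwards [Ioi_mem_nhds hx] with y hy using one_of_one_le hy.le
  rw [h.deriv_eq, deriv_const]

lemma deriv_mul_self_of_nonpos {x : ℝ} (hx : x ≤ 0) : deriv smoothTransition x * x = 0 := by
  rcases hx.lt_or_eq with hx | rfl
  · rw [deriv_of_neg hx, zero_mul]
  · rw [mul_zero]

lemma deriv_mul_self_of_one_lt {x : ℝ} (hx : 1 < x) : deriv smoothTransition x * x = 0 := by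
  rw [deriv_of_one_lt hx, zero_mul]

lemma exists_abs_deriv_mul_self_le : ∃ C, ∀ x, |deriv smoothTransition x * x| ≤ C := by
  refine (continuous_deriv.mul continuous_id).bounded_above_of_compact_support ?_
  refine HasCompactSupport.intro (isCompact_Icc (a := 0) (b := 1)) fun x hx => ?_
  rcases le_or_gt x 0 with h0 | h0
  · exact deriv_mul_self_of_nonpos h0
  · exact deriv_mul_self_of_one_lt (lt_of_not_ge fun h1 => hx ⟨h0.le, h1⟩)

end Real.smoothTransition

section Approximation

variable {f : ℝ → ℝ} {y₀ y₁ : ℝ}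

lemma tendsto_comp_natCast_mul (h₀ : ∀ x ≤ 0, f x = y₀) (h₁ : ∀ x, 1 < x → f x = y₁) (a : ℝ) :
    Tendsto (fun n : ℕ => f (n * a)) atTop (𝓝 (if 0 < a then y₁ else y₀)) := by
  split_ifs with ha
  · refine tendsto_const_nhds.congr' ?_
    filter_upwards [(tendsto_natCast_atTop_atTop.atTop_mul_const ha).eventually_gt_atTop 1]
      with n hn using (h₁ _ hn).symm
  · exact tendsto_const_nhds.congr fun n =>
      (h₀ _ (mul_nonpos_of_nonneg_of_nonpos n.cast_nonneg (not_lt.1 ha))).symm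

lemma tendsto_integral_comp_natCast_mul_mul {C : ℝ} (hf : Continuous f) (hC : ∀ x, |f x| ≤ C)
    (h₀ : ∀ x ≤ 0, f x = y₀) (h₁ : ∀ x, 1 < x → f x = y₁) {u w : ℝ → ℝ}
    (hu : Continuous u) (hw : Continuous w) (a b : ℝ) :
    Tendsto (fun n : ℕ => ∫ s in a..b, f (n * u s) * w s) atTop
      (𝓝 (∫ s in a..b, (if 0 < u s then y₁ else y₀) * w s)) := by
  refine tendsto_integral_filter_of_dominated_convergence (fun s => C * |w s|)
    (Eventually.of_forall fun n => ?_) (Eventually.of_forall fun n => ?_)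
    ((continuous_const.mul hw.abs).intervalIntegrable a b) ?_
  · exact ((hf.comp (continuous_const.mul hu)).mul hw).aestronglyMeasurable
  · refine Eventually.of_forall fun s _ => ?_
    rw [norm_mul, Real.norm_eq_abs, Real.norm_eq_abs]
    exact mul_le_mul_of_nonneg_right (hC _) (abs_nonneg _)
  · exact Eventually.of_forall fun s _ => (tendsto_comp_natCast_mul h₀ h₁ (u s)).mul_const (w s)

end Approximation

lemma intervalIntegrable_ite_pos_mul {u f : ℝ → ℝ} (hu : Continuous u) (hf : Continuous f)
    (a b : ℝ) :
    IntervalIntegrable (fun s => (if 0 < u s then (1 : ℝ) else 0) * f s) volume a b := by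
  refine (hf.intervalIntegrable a b).mono_fun ?_ (Eventually.of_forall fun s => ?_)
  · exact ((Measurable.ite (measurableSet_lt measurable_const hu.measurable) measurable_const
      measurable_const).mul hf.measurable).aestronglyMeasurable
  · dsimp only
    split_ifs <;> simp

lemma ite_pos_mul_self (x : ℝ) : (if 0 < x then (1 : ℝ) else 0) * x = max x 0 := by
  split_ifs with hx
  · rw [one_mul, max_eq_left hx.le]
  · rw [zero_mul, max_eq_right (not_lt.1 hx)]

lemma integral_ite_pos_mul_eq_of_resolvent {u μ F h : ℝ → ℝ} {a b lam ω : ℝ} (hab : a ≤ b)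
    (hu : Continuous u) (hμ : Continuous μ) (hF : Continuous F)
    (hres : ∀ s ∈ Set.Ioo a b, h s = u s - lam * (F s - μ s * u s - ω * u s)) :
    ∫ s in a..b, (if 0 < u s then (1 : ℝ) else 0) * h s
      = (∫ s in a..b, max (u s) 0) - lam * (∫ s in a..b, (if 0 < u s then (1 : ℝ) else 0) * F s)
        + lam * (∫ s in a..b, (if 0 < u s then (1 : ℝ) else 0) * μ s * u s)
        + lam * ω * (∫ s in a..b, max (u s) 0) := by
  have hmax : IntervalIntegrable (fun s => max (u s) 0) volume a b :=
    (hu.max continuous_const).intervalIntegrable a b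
  have hχF := intervalIntegrable_ite_pos_mul hu hF a b
  have hχμu : IntervalIntegrable (fun s => (if 0 < u s then (1 : ℝ) else 0) * μ s * u s)
      volume a b := by
    simpa only [mul_assoc] using
      intervalIntegrable_ite_pos_mul (f := fun s => μ s * u s) hu (hμ.mul hu) a b
  rw [← intervalIntegral.integral_const_mul, ← intervalIntegral.integral_const_mul,
    ← intervalIntegral.integral_const_mul, ← integral_sub hmax (hχF.const_mul lam),
    ← integral_add (hmax.sub (hχF.const_mul lam)) (hχμu.const_mul lam),
    ← integral_add ((hmax.sub (hχF.const_mul lam)).add (hχμu.const_mul lam)) (hmax.const_mul _),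
    integral_of_le hab, integral_of_le hab, integral_Ioc_eq_integral_Ioo,
    integral_Ioc_eq_integral_Ioo]
  refine setIntegral_congr_fun measurableSet_Ioo fun s hs => ?_
  rw [hres s hs, ← ite_pos_mul_self]
  ring

/-- At zeros of `u` the hypothesis says `u' v ≥ 0`: this is what makes the boundary terms of the
components of `{u > 0}` inside `(a, b)` nonpositive. -/
theorem integral_ite_pos_mul_deriv_le {u v g : ℝ → ℝ} {a b : ℝ} (hab : a ≤ b)
    (hu : ContDiff ℝ 1 u) (hv : ContDiff ℝ 1 v) (hg : Continuous g)
    (hug : ∀ s ∈ Set.Icc a b, u s * g s ≤ deriv u s * v s) :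
    ∫ s in a..b, (if 0 < u s then (1 : ℝ) else 0) * deriv v s
      ≤ (if 0 < u b then (1 : ℝ) else 0) * v b - (if 0 < u a then (1 : ℝ) else 0) * v a := by
  set T := smoothTransition
  have hT₀ : ∀ x ≤ 0, T x = 0 := fun x => smoothTransition.zero_of_nonpos
  have hT₁ : ∀ x, 1 < x → T x = 1 := fun x hx => smoothTransition.one_of_one_le hx.le
  have hu' : Continuous (deriv u) := hu.continuous_deriv le_rfl
  have hv' : Continuous (deriv v) := hv.continuous_deriv le_rfl
  have hibp (n : ℕ) : ∫ s in a..b, T (n * u s) * deriv v s = T (n * u b) * v b - T (n * u a) * v a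
      - ∫ s in a..b, deriv T (n * u s) * (n * deriv u s) * v s := by
    refine integral_mul_deriv_eq_deriv_mul (fun s _ => ?_)
      (fun s _ => (hv.differentiable one_ne_zero s).hasDerivAt) ?_ (hv'.intervalIntegrable a b)
    · exact (smoothTransition.contDiff (n := 1).differentiable one_ne_zero _).hasDerivAt.comp s
        ((hu.differentiable one_ne_zero s).hasDerivAt.const_mul _)
    · exact ((smoothTransition.continuous_deriv.comp (continuous_const.mul hu.continuous)).mul
        (continuous_const.mul hu')).intervalIntegrable a b
  have hrem (n : ℕ) : ∫ s in a..b, deriv T (n * u s) * (n * u s) * g s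
      ≤ ∫ s in a..b, deriv T (n * u s) * (n * deriv u s) * v s := by
    refine integral_mono_on hab (Continuous.intervalIntegrable (by fun_prop) a b)
      (Continuous.intervalIntegrable (by fun_prop) a b) fun s hs => ?_
    have := mul_le_mul_of_nonneg_left (hug s hs)
      (mul_nonneg (smoothTransition.deriv_nonneg (n * u s)) n.cast_nonneg)
    linarith
  obtain ⟨C, hC⟩ := smoothTransition.exists_abs_deriv_mul_self_le
  have hlim_bulk := tendsto_integral_comp_natCast_mul_mul smoothTransition.continuous
    smoothTransition.abs_le_one hT₀ hT₁ hu.continuous hv' a b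
  have hlim_rem := tendsto_integral_comp_natCast_mul_mul
    (smoothTransition.continuous_deriv.mul continuous_id) hC
    (fun x => smoothTransition.deriv_mul_self_of_nonpos)
    (fun x => smoothTransition.deriv_mul_self_of_one_lt) hu.continuous hg a b
  simp only [ite_self, zero_mul, intervalIntegral.integral_zero] at hlim_rem
  have hlim_bdry := ((tendsto_comp_natCast_mul hT₀ hT₁ (u b)).mul_const (v b)).sub
    ((tendsto_comp_natCast_mul hT₀ hT₁ (u a)).mul_const (v a))
  refine le_of_tendsto_of_tendsto' hlim_bulk (by simpa using hlim_bdry.sub hlim_rem) fun n => ?_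
  linarith [hibp n, hrem n]

theorem positive_part_estimate_general (m : ℝ) (hm : 0 < m)
    (d γ μ : ℝ → ℝ) (hd : ContDiff ℝ 1 d) (hγ : ContDiff ℝ 1 γ)
    (hdpos : ∀ s ∈ Set.Icc (0:ℝ) m, 0 < d s)
    (hμ : Continuous μ)
    (ω lam : ℝ) (hlam : 0 < lam)
    (u : ℝ → ℝ) (hu : ContDiff ℝ 2 u)
    (h : ℝ → ℝ)
    (hres : ∀ s ∈ Set.Ioo (0:ℝ) m,
      h s = u s - lam * (deriv (fun σ => d σ * deriv u σ) s
        - deriv (fun σ => γ σ * u σ) s - μ s * u s - ω * u s)) :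
    (∫ s in (0)..m, max (u s) 0)
      ≤ lam * ((if 0 < u m then (1:ℝ) else 0) * d m * deriv u m
          - (if 0 < u 0 then (1:ℝ) else 0) * d 0 * deriv u 0)
        - lam * ((if 0 < u m then (1:ℝ) else 0) * γ m * u m
          - (if 0 < u 0 then (1:ℝ) else 0) * γ 0 * u 0)
        - lam * (∫ s in (0)..m, (if 0 < u s then (1:ℝ) else 0) * μ s * u s)
        - lam * ω * (∫ s in (0)..m, max (u s) 0)
        + ∫ s in (0)..m, (if 0 < u s then (1:ℝ) else 0) * h s := by
  have hu₁ : ContDiff ℝ 1 u := hu.of_le one_le_two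
  have hu' : ContDiff ℝ 1 (deriv u) := hu.deriv'
  have hdu : ContDiff ℝ 1 fun σ => d σ * deriv u σ := hd.mul hu'
  have hγu : ContDiff ℝ 1 fun σ => γ σ * u σ := hγ.mul hu₁
  have hflux := integral_ite_pos_mul_deriv_le (g := fun s => -(γ s * deriv u s)) hm.le hu₁
    (hdu.sub hγu) (by fun_prop) fun s hs => by nlinarith [hdpos s hs, sq_nonneg (deriv u s)]
  have hdata := integral_ite_pos_mul_eq_of_resolvent (h := h) (lam := lam) (ω := ω) hm.le
    hu.continuous hμ ((hdu.sub hγu).continuous_deriv le_rfl) fun s hs => by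
      rw [hres s hs, deriv_fun_sub (hdu.differentiable one_ne_zero s)
        (hγu.differentiable one_ne_zero s)]
  nlinarith [mul_le_mul_of_nonneg_left hflux hlam.le]

/-- The positive-part estimate in the dissipativity proof: multiplying the resolvent
equation by the indicator of `{u > 0}` and integrating over `(0,m)` yields an upper bound
for `‖u⁺‖₁` in terms of boundary fluxes, drift, mortality, and the data `h`. -/
theorem positive_part_estimate (m : ℝ) (hm : 0 < m)
    (d γ μ : ℝ → ℝ) (hd : ContDiff ℝ 1 d) (hγ : ContDiff ℝ 1 γ)
    (hdpos : ∀ s ∈ Set.Icc (0:ℝ) m, 0 < d s)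
    (hμ : Continuous μ) (hμpos : ∀ s ∈ Set.Icc (0:ℝ) m, 0 ≤ μ s)
    (ω lam : ℝ) (hlam : 0 < lam)
    (u : ℝ → ℝ) (hu : ContDiff ℝ 2 u)
    (h : ℝ → ℝ)
    (hres : ∀ s ∈ Set.Ioo (0:ℝ) m,
      h s = u s - lam * (deriv (fun σ => d σ * deriv u σ) s
        - deriv (fun σ => γ σ * u σ) s - μ s * u s - ω * u s)) :
    (∫ s in (0)..m, max (u s) 0)
      ≤ lam * ((if 0 < u m then (1:ℝ) else 0) * d m * deriv u m
          - (if 0 < u 0 then (1:ℝ) else 0) * d 0 * deriv u 0)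
        - lam * ((if 0 < u m then (1:ℝ) else 0) * γ m * u m
          - (if 0 < u 0 then (1:ℝ) else 0) * γ 0 * u 0)
        - lam * (∫ s in (0)..m, (if 0 < u s then (1:ℝ) else 0) * μ s * u s)
        - lam * ω * (∫ s in (0)..m, max (u s) 0)
        + ∫ s in (0)..m, (if 0 < u s then (1:ℝ) else 0) * h s :=
  positive_part_estimate_general m hm d γ μ hd hγ hdpos hμ ω lam hlam u hu h hres
end

section
/- Under the hypotheses that c₁ = d(0)/(b₀ − γ(0)) > 0 and c₂ = d(m)/(γ(m) + b_m) > 0, there exists ω ∈ ℝ such that for all λ > 0 and all u ∈ D(Ã), ‖u‖_𝒳 ≤ ‖u − λ(Ã − ωI)u‖_𝒳; i.e., the operator Ã − ωI is dissipative on 𝒳 = L¹(0,m) ⊕ ℝ² with the weighted norm ‖(x,x₀,x_m)‖ = ‖x‖₁ + c₁|x₀| + c₂|x_m|. -/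
/-!
Pair `u - λ(Ã - ω)u` with the sign of `(u, u 0, u m)`, i.e. with the duality map of `𝒳`; to
integrate by parts, the sign is smoothed to `r / √(r² + ε²)`. Since the smoothed sign is
increasing, the diffusion term `∫ sign(u) (d u')'` is bounded by its boundary values, and the
drift term equals its boundary values up to `O(ε)`. The weights `c₁ = d(0)/(b₀ - γ(0))` and
`c₂ = d(m)/(γ(m) + b_m)` make the boundary fluxes `d u'` cancel against the boundary components
of `Ã u`, leaving multiples of `sign(u) u = |u|` at `0` and `m` whose coefficients are
nonpositive once `ω` is large. Hence `‖u‖ ≤ ‖u - λ(Ã - ω)u‖ + O(ε)`, and `ε → 0`.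
-/

open MeasureTheory intervalIntegral Filter Topology Set

noncomputable def smoothAbs (ε r : ℝ) : ℝ := √(r ^ 2 + ε ^ 2)

noncomputable def smoothSign (ε r : ℝ) : ℝ := r / smoothAbs ε r

section SmoothSign

variable {ε : ℝ}

theorem smoothAbs_pos (hε : 0 < ε) (r : ℝ) : 0 < smoothAbs ε r :=
  Real.sqrt_pos.mpr (by positivity)

theorem sq_smoothAbs (ε r : ℝ) : smoothAbs ε r ^ 2 = r ^ 2 + ε ^ 2 :=
  Real.sq_sqrt (by positivity)

theorem abs_le_smoothAbs (ε r : ℝ) : |r| ≤ smoothAbs ε r :=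
  Real.abs_le_sqrt (by nlinarith)

theorem le_smoothAbs (ε r : ℝ) : ε ≤ smoothAbs ε r :=
  (le_abs_self ε).trans (Real.abs_le_sqrt (by nlinarith))

theorem abs_smoothSign_le_one (hε : 0 < ε) (r : ℝ) : |smoothSign ε r| ≤ 1 := by
  rw [smoothSign, abs_div, abs_of_pos (smoothAbs_pos hε r)]
  exact div_le_one_of_le₀ (abs_le_smoothAbs ε r) (smoothAbs_pos hε r).le

theorem smoothSign_mul_self (hε : 0 < ε) (r : ℝ) :
    smoothSign ε r * r = smoothAbs ε r - ε ^ 2 / smoothAbs ε r := by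
  have := smoothAbs_pos hε r
  rw [smoothSign]
  field_simp
  linear_combination -sq_smoothAbs ε r

theorem smoothSign_mul_self_nonneg (ε r : ℝ) : 0 ≤ smoothSign ε r * r := by
  rw [smoothSign, div_mul_eq_mul_div]
  exact div_nonneg (mul_self_nonneg r) (Real.sqrt_nonneg _)

theorem smoothSign_mul_self_le_smoothAbs (hε : 0 < ε) (r : ℝ) :
    smoothSign ε r * r ≤ smoothAbs ε r := by
  rw [smoothSign_mul_self hε]
  linarith [div_pos (pow_pos hε 2) (smoothAbs_pos hε r)]

theorem smoothAbs_le_smoothSign_mul_self_add (hε : 0 < ε) (r : ℝ) :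
    smoothAbs ε r ≤ smoothSign ε r * r + ε := by
  have hpos := smoothAbs_pos hε r
  have : ε ^ 2 / smoothAbs ε r ≤ ε := by
    rw [div_le_iff₀ hpos]; nlinarith [le_smoothAbs ε r]
  linarith [smoothSign_mul_self hε r]

theorem abs_le_abs_sub_add_smoothSign_mul (hε : 0 < ε) (r s : ℝ) :
    |r| ≤ |r - s| + smoothSign ε r * s + ε := by
  have h₁ : smoothSign ε r * (r - s) ≤ |r - s| := by
    refine (le_abs_self _).trans ?_
    rw [abs_mul]
    exact mul_le_of_le_one_left (abs_nonneg _) (abs_smoothSign_le_one hε r)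
  linarith [abs_le_smoothAbs ε r, smoothAbs_le_smoothSign_mul_self_add hε r,
    mul_sub (smoothSign ε r) r s]

theorem hasDerivAt_smoothAbs (hε : 0 < ε) (r : ℝ) :
    HasDerivAt (smoothAbs ε) (smoothSign ε r) r := by
  refine (((hasDerivAt_pow 2 r).add_const (ε ^ 2)).sqrt (by positivity)).congr_deriv ?_
  simp only [smoothSign, smoothAbs]
  field_simp
  norm_num

theorem hasDerivAt_smoothSign (hε : 0 < ε) (r : ℝ) :
    HasDerivAt (smoothSign ε) (ε ^ 2 / smoothAbs ε r ^ 3) r := by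
  have hpos := smoothAbs_pos hε r
  refine ((hasDerivAt_id' r).div (hasDerivAt_smoothAbs hε r) hpos.ne').congr_deriv ?_
  rw [smoothSign]
  field_simp
  linear_combination sq_smoothAbs ε r

theorem continuous_smoothAbs (hε : 0 < ε) : Continuous (smoothAbs ε) :=
  continuous_iff_continuousAt.2 fun r => (hasDerivAt_smoothAbs hε r).continuousAt

theorem continuous_smoothSign (hε : 0 < ε) : Continuous (smoothSign ε) :=
  continuous_iff_continuousAt.2 fun r => (hasDerivAt_smoothSign hε r).continuousAt

end SmoothSign

section Integral

variable {a b ε : ℝ} {u d γ : ℝ → ℝ}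

theorem integral_smoothSign_mul_deriv_diffusion_le (hab : a ≤ b) (hε : 0 < ε)
    (hu : ContDiff ℝ 2 u) (hd : ContDiff ℝ 1 d) (hd_nonneg : ∀ s ∈ Icc a b, 0 ≤ d s) :
    ∫ s in a..b, smoothSign ε (u s) * deriv (fun σ => d σ * deriv u σ) s
      ≤ smoothSign ε (u b) * (d b * deriv u b) - smoothSign ε (u a) * (d a * deriv u a) := by
  have hu' : ContDiff ℝ 1 (deriv u) := hu.deriv'
  have hflux : ContDiff ℝ 1 fun σ => d σ * deriv u σ := hd.mul hu'
  have hsign : ∀ s, HasDerivAt (fun s => smoothSign ε (u s))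
      (ε ^ 2 / smoothAbs ε (u s) ^ 3 * deriv u s) s := fun s =>
    (hasDerivAt_smoothSign hε (u s)).comp s (hu.differentiable two_ne_zero s).hasDerivAt
  have hsign' : Continuous fun s => ε ^ 2 / smoothAbs ε (u s) ^ 3 * deriv u s :=
    (continuous_const.div (((continuous_smoothAbs hε).comp hu.continuous).pow 3)
      fun s => (pow_pos (smoothAbs_pos hε (u s)) 3).ne').mul hu'.continuous
  rw [integral_mul_deriv_eq_deriv_mul (fun s _ => hsign s)
    (fun s _ => (hflux.differentiable one_ne_zero s).hasDerivAt)
    (hsign'.intervalIntegrable a b) ((hflux.continuous_deriv le_rfl).intervalIntegrable a b)]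
  -- `smoothSign ε` is increasing, so the flux term has a sign
  have hdissip :
      0 ≤ ∫ s in a..b, ε ^ 2 / smoothAbs ε (u s) ^ 3 * deriv u s * (d s * deriv u s) :=
    integral_nonneg hab fun s hs => by
      have := smoothAbs_pos hε (u s)
      rw [show ε ^ 2 / smoothAbs ε (u s) ^ 3 * deriv u s * (d s * deriv u s)
        = ε ^ 2 / smoothAbs ε (u s) ^ 3 * d s * deriv u s ^ 2 by ring]
      exact mul_nonneg (mul_nonneg (by positivity) (hd_nonneg s hs)) (sq_nonneg _)
  linarith

theorem abs_mul_le_mul_abs_of_nonneg_of_le {c D : ℝ} (hD₀ : 0 ≤ D) (hD₁ : D ≤ ε) :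
    |c * D| ≤ ε * |c| := by
  rw [abs_mul, abs_of_nonneg hD₀, mul_comm]
  exact mul_le_mul_of_nonneg_right hD₁ (abs_nonneg c)

theorem integral_smoothSign_mul_deriv_drift_ge (hab : a ≤ b) (hε : 0 < ε)
    (hu : ContDiff ℝ 1 u) (hγ : ContDiff ℝ 1 γ) :
    smoothSign ε (u b) * (γ b * u b) - smoothSign ε (u a) * (γ a * u a)
        - ε * (|γ a| + |γ b| + ∫ s in a..b, |deriv γ s|)
      ≤ ∫ s in a..b, smoothSign ε (u s) * deriv (fun σ => γ σ * u σ) s := by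
  set D := fun s => smoothAbs ε (u s) - smoothSign ε (u s) * u s with hD
  have hD₀ : ∀ s, 0 ≤ D s := fun s => sub_nonneg.2 (smoothSign_mul_self_le_smoothAbs hε (u s))
  have hD₁ : ∀ s, D s ≤ ε := fun s => by
    linarith [smoothAbs_le_smoothSign_mul_self_add hε (u s)]
  have := continuous_smoothSign hε
  have := continuous_smoothAbs hε
  have := hu.continuous
  have := hγ.continuous
  have hγ' := hγ.continuous_deriv le_rfl
  have := hu.continuous_deriv le_rfl
  -- `smoothSign ε u · (γ u)' = (γ · smoothAbs ε u)' - γ' D` with the defect `D ∈ [0, ε]`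
  have hprim : ∀ s, HasDerivAt (fun s => γ s * smoothAbs ε (u s))
      (deriv γ s * smoothAbs ε (u s) + γ s * (smoothSign ε (u s) * deriv u s)) s := fun s =>
    (hγ.differentiable one_ne_zero s).hasDerivAt.mul
      ((hasDerivAt_smoothAbs hε (u s)).comp s (hu.differentiable one_ne_zero s).hasDerivAt)
  have hsplit : ∫ s in a..b, smoothSign ε (u s) * deriv (fun σ => γ σ * u σ) s
      = (γ b * smoothAbs ε (u b) - γ a * smoothAbs ε (u a)) - ∫ s in a..b, deriv γ s * D s := by
    rw [← integral_eq_sub_of_hasDerivAt (fun s _ => hprim s)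
      (Continuous.intervalIntegrable (by fun_prop) a b),
      ← integral_sub (Continuous.intervalIntegrable (by fun_prop) a b)
        (Continuous.intervalIntegrable (by fun_prop) a b)]
    refine integral_congr fun s _ => ?_
    rw [deriv_fun_mul (hγ.differentiable one_ne_zero s) (hu.differentiable one_ne_zero s)]
    ring
  have hint : ∫ s in a..b, deriv γ s * D s ≤ ε * ∫ s in a..b, |deriv γ s| := by
    rw [← intervalIntegral.integral_const_mul]
    refine integral_mono_on hab (Continuous.intervalIntegrable (by fun_prop) a b)
      (Continuous.intervalIntegrable (by fun_prop) a b) fun s _ => ?_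
    exact (le_abs_self _).trans (abs_mul_le_mul_abs_of_nonneg_of_le (hD₀ s) (hD₁ s))
  have hb := (neg_abs_le _).trans'
    (neg_le_neg (abs_mul_le_mul_abs_of_nonneg_of_le (c := γ b) (hD₀ b) (hD₁ b)))
  have ha := (le_abs_self _).trans (abs_mul_le_mul_abs_of_nonneg_of_le (c := γ a) (hD₀ a) (hD₁ a))
  rw [hsplit]
  simp only [hD] at hb ha
  linarith

end Integral

noncomputable def weightedNorm (m c₁ c₂ : ℝ) (x : ℝ → ℝ) (x₀ x₁ : ℝ) : ℝ :=
  (∫ s in (0)..m, |x s|) + c₁ * |x₀| + c₂ * |x₁|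

noncomputable def smoothSignPairing (ε m c₁ c₂ : ℝ) (u x : ℝ → ℝ) (x₀ x₁ : ℝ) : ℝ :=
  (∫ s in (0)..m, smoothSign ε (u s) * x s) + c₁ * (smoothSign ε (u 0) * x₀)
    + c₂ * (smoothSign ε (u m) * x₁)

section Pairing

variable {m c₁ c₂ ε : ℝ} {u d γ μ : ℝ → ℝ}

theorem weightedNorm_le_of_smoothSignPairing_le {y : ℝ → ℝ} {y₀ y₁ lam C : ℝ} (hm : 0 ≤ m)
    (hε : 0 < ε) (hc₁ : 0 ≤ c₁) (hc₂ : 0 ≤ c₂) (hu : Continuous u) (hy : Continuous y)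
    (hlam : 0 ≤ lam) (hpair : smoothSignPairing ε m c₁ c₂ u y y₀ y₁ ≤ ε * C) :
    weightedNorm m c₁ c₂ u (u 0) (u m)
      ≤ weightedNorm m c₁ c₂ (fun s => u s - lam * y s) (u 0 - lam * y₀) (u m - lam * y₁)
        + ε * (m + c₁ + c₂ + lam * C) := by
  have := continuous_smoothSign hε
  have hint : ∫ s in (0)..m, |u s| ≤ (∫ s in (0)..m, |u s - lam * y s|)
      + lam * (∫ s in (0)..m, smoothSign ε (u s) * y s) + ε * m := by
    calc ∫ s in (0)..m, |u s|
        ≤ ∫ s in (0)..m, (|u s - lam * y s| + lam * (smoothSign ε (u s) * y s) + ε) :=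
          integral_mono_on hm (Continuous.intervalIntegrable (by fun_prop) _ _)
            (Continuous.intervalIntegrable (by fun_prop) _ _) fun s _ => by
              simpa only [mul_left_comm] using
                abs_le_abs_sub_add_smoothSign_mul hε (u s) (lam * y s)
      _ = _ := by
          rw [intervalIntegral.integral_add, intervalIntegral.integral_add,
            intervalIntegral.integral_const_mul, intervalIntegral.integral_const,
            smul_eq_mul, sub_zero, mul_comm m]
          all_goals exact Continuous.intervalIntegrable (by fun_prop) _ _
  have h₀ := mul_le_mul_of_nonneg_left (abs_le_abs_sub_add_smoothSign_mul hε (u 0) (lam * y₀)) hc₁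
  have h₁ := mul_le_mul_of_nonneg_left (abs_le_abs_sub_add_smoothSign_mul hε (u m) (lam * y₁)) hc₂
  have := mul_le_mul_of_nonneg_left hpair hlam
  simp only [weightedNorm, smoothSignPairing] at this ⊢
  linarith

theorem continuous_interior_term {ω : ℝ} (hu : ContDiff ℝ 2 u) (hd : ContDiff ℝ 1 d)
    (hγ : ContDiff ℝ 1 γ) (hμ : Continuous μ) :
    Continuous fun s => deriv (fun σ => d σ * deriv u σ) s - deriv (fun σ => γ σ * u σ) s
      - μ s * u s - ω * u s := by
  have := (hd.mul hu.deriv').continuous_deriv le_rfl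
  have := (hγ.mul (hu.of_le one_le_two)).continuous_deriv le_rfl
  have := hu.continuous
  fun_prop

theorem smoothSignPairing_le {b₀ b₁ ρ₀ ρ₁ ω : ℝ} (hm : 0 ≤ m) (hε : 0 < ε)
    (hu : ContDiff ℝ 2 u) (hd : ContDiff ℝ 1 d) (hγ : ContDiff ℝ 1 γ) (hμ : Continuous μ)
    (hd_nonneg : ∀ s ∈ Icc 0 m, 0 ≤ d s) (hμω : ∀ s ∈ Icc 0 m, 0 ≤ μ s + ω)
    (hc₁ : c₁ * (b₀ - γ 0) = d 0) (hc₂ : c₂ * (γ m + b₁) = d m)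
    (hρ₀ : γ 0 ≤ c₁ * (ρ₀ + ω)) (hρ₁ : -γ m ≤ c₂ * (ρ₁ + ω)) :
    smoothSignPairing ε m c₁ c₂ u
        (fun s => deriv (fun σ => d σ * deriv u σ) s - deriv (fun σ => γ σ * u σ) s
          - μ s * u s - ω * u s)
        ((b₀ - γ 0) * deriv u 0 - ρ₀ * u 0 - ω * u 0)
        ((-b₁ - γ m) * deriv u m - ρ₁ * u m - ω * u m)
      ≤ ε * (|γ 0| + |γ m| + ∫ s in (0)..m, |deriv γ s|) := by
  have hdiff := integral_smoothSign_mul_deriv_diffusion_le hm hε hu hd hd_nonneg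
  have hdrift := integral_smoothSign_mul_deriv_drift_ge hm hε (hu.of_le one_le_two) hγ
  have habs : 0 ≤ ∫ s in (0)..m, smoothSign ε (u s) * ((μ s + ω) * u s) :=
    integral_nonneg hm fun s hs => by
      rw [mul_left_comm]
      exact mul_nonneg (hμω s hs) (smoothSign_mul_self_nonneg ε (u s))
  have := continuous_smoothSign hε
  have := hu.continuous
  have := (hd.mul hu.deriv').continuous_deriv le_rfl
  have := (hγ.mul (hu.of_le one_le_two)).continuous_deriv le_rfl
  have hsplit : ∫ s in (0)..m, smoothSign ε (u s) * (deriv (fun σ => d σ * deriv u σ) s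
        - deriv (fun σ => γ σ * u σ) s - μ s * u s - ω * u s)
      = (∫ s in (0)..m, smoothSign ε (u s) * deriv (fun σ => d σ * deriv u σ) s)
        - (∫ s in (0)..m, smoothSign ε (u s) * deriv (fun σ => γ σ * u σ) s)
        - ∫ s in (0)..m, smoothSign ε (u s) * ((μ s + ω) * u s) := by
    rw [← intervalIntegral.integral_sub, ← intervalIntegral.integral_sub]
    · exact integral_congr fun s _ => by ring
    all_goals exact Continuous.intervalIntegrable (by fun_prop) _ _
  -- by `hc₁, hc₂` the boundary fluxes `∓ d u'` cancel, leaving multiples of `smoothSign ε u * u`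
  have hbd₀ : 0 ≤ smoothSign ε (u 0) * u 0 * (c₁ * (ρ₀ + ω) - γ 0) :=
    mul_nonneg (smoothSign_mul_self_nonneg ε (u 0)) (sub_nonneg.2 hρ₀)
  have hbd₁ : 0 ≤ smoothSign ε (u m) * u m * (c₂ * (ρ₁ + ω) + γ m) :=
    mul_nonneg (smoothSign_mul_self_nonneg ε (u m)) (by linarith)
  simp only [smoothSignPairing]
  rw [hsplit]
  linear_combination hdiff + hdrift + habs + hbd₀ + hbd₁
    + smoothSign ε (u 0) * deriv u 0 * hc₁ - smoothSign ε (u m) * deriv u m * hc₂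

end Pairing

theorem mul_eq_of_eq_div_of_ne_zero {a b c : ℝ} (h : c = a / b) (hc : c ≠ 0) : c * b = a := by
  rw [h, div_mul_cancel₀]
  rintro rfl
  simp [h] at hc

theorem eventually_le_mul_add_atTop {c : ℝ} (hc : 0 < c) (ρ p : ℝ) :
    ∀ᶠ ω in atTop, p ≤ c * (ρ + ω) :=
  ((tendsto_atTop_add_const_left _ ρ tendsto_id).const_mul_atTop hc).eventually_ge_atTop p

theorem le_of_forall_pos_le_add_mul {x y K : ℝ} (h : ∀ ε > 0, x ≤ y + ε * K) : x ≤ y := by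
  have hlim : Tendsto (fun ε => y + ε * K) (𝓝[>] 0) (𝓝 y) :=
    ((by fun_prop : Continuous fun ε => y + ε * K).tendsto' 0 y (by simp)).mono_left
      nhdsWithin_le_nhds
  exact ge_of_tendsto hlim (eventually_nhdsWithin_of_forall h)

theorem dissipativity_general (m : ℝ) (hm : 0 < m)
    (d γ μ : ℝ → ℝ) (hd : ContDiff ℝ 1 d) (hγ : ContDiff ℝ 1 γ)
    (hdpos : ∀ s ∈ Set.Icc (0:ℝ) m, 0 < d s)
    (hμ : Continuous μ) (hμpos : ∀ s ∈ Set.Icc (0:ℝ) m, 0 ≤ μ s)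
    (b0 bm c0 cm : ℝ)
    (c₁ c₂ : ℝ) (hc₁ : c₁ = d 0 / (b0 - γ 0)) (hc₂ : c₂ = d m / (γ m + bm))
    (hc₁pos : 0 < c₁) (hc₂pos : 0 < c₂) :
    ∃ ω : ℝ, ∀ lam : ℝ, 0 < lam → ∀ u : ℝ → ℝ, ContDiff ℝ 2 u →
      -- Wentzell–Robin boundary conditions (u ∈ D(Ã))
      deriv (fun σ => d σ * deriv u σ) 0 - b0 * deriv u 0 + c0 * u 0 = 0 →
      deriv (fun σ => d σ * deriv u σ) m + bm * deriv u m + cm * u m = 0 →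
      -- dissipativity estimate ‖u‖_𝒳 ≤ ‖u − λ(Ã − ωI)u‖_𝒳
      (∫ s in (0)..m, |u s|) + c₁ * |u 0| + c₂ * |u m|
        ≤ (∫ s in (0)..m, |u s - lam * (deriv (fun σ => d σ * deriv u σ) s
              - deriv (fun σ => γ σ * u σ) s - μ s * u s - ω * u s)|)
          + c₁ * |u 0 - lam * ((b0 - γ 0) * deriv u 0
              - (μ 0 + c0 + deriv γ 0) * u 0 - ω * u 0)|
          + c₂ * |u m - lam * ((-bm - γ m) * deriv u m
              - (μ m + cm + deriv γ m) * u m - ω * u m)| := by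
  obtain ⟨ω, hω, hω₀, hωm⟩ := ((eventually_ge_atTop 0).and
    ((eventually_le_mul_add_atTop hc₁pos (μ 0 + c0 + deriv γ 0) (γ 0)).and
      (eventually_le_mul_add_atTop hc₂pos (μ m + cm + deriv γ m) (-γ m)))).exists
  refine ⟨ω, fun lam hlam u hu _ _ => ?_⟩
  apply le_of_forall_pos_le_add_mul
  intro ε hε
  exact weightedNorm_le_of_smoothSignPairing_le hm.le hε hc₁pos.le hc₂pos.le hu.continuous
    (continuous_interior_term hu hd hγ hμ) hlam.le
    (smoothSignPairing_le hm.le hε hu hd hγ hμ (fun s hs => (hdpos s hs).le)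
      (fun s hs => add_nonneg (hμpos s hs) hω)
      (mul_eq_of_eq_div_of_ne_zero hc₁ hc₁pos.ne') (mul_eq_of_eq_div_of_ne_zero hc₂ hc₂pos.ne')
      hω₀ hωm)

/-- Dissipativity of `Ã − ωI` for large enough `ω`: with the weights
`c₁ = d(0)/(b₀ − γ(0)) > 0` and `c₂ = d(m)/(γ(m) + b_m) > 0`, there is `ω ∈ ℝ` such that
for every `λ > 0` and every `u ∈ D(Ã)` (i.e. `u ∈ C²` satisfying the Wentzell–Robin
boundary conditions), `‖u‖_𝒳 ≤ ‖u − λ(Ã − ωI)u‖_𝒳` in the weighted norm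
`‖(x,x₀,x_m)‖ = ‖x‖₁ + c₁|x₀| + c₂|x_m|`. -/
theorem dissipativity (m : ℝ) (hm : 0 < m)
    (d γ μ : ℝ → ℝ) (hd : ContDiff ℝ 1 d) (hγ : ContDiff ℝ 1 γ)
    (hdpos : ∀ s ∈ Set.Icc (0:ℝ) m, 0 < d s)
    (hμ : Continuous μ) (hμpos : ∀ s ∈ Set.Icc (0:ℝ) m, 0 ≤ μ s)
    (b0 bm c0 cm : ℝ) (hb0 : 0 < b0) (hbm : 0 < bm) (hc0 : 0 ≤ c0) (hcm : 0 ≤ cm)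
    (c₁ c₂ : ℝ) (hc₁ : c₁ = d 0 / (b0 - γ 0)) (hc₂ : c₂ = d m / (γ m + bm))
    (hc₁pos : 0 < c₁) (hc₂pos : 0 < c₂) :
    ∃ ω : ℝ, ∀ lam : ℝ, 0 < lam → ∀ u : ℝ → ℝ, ContDiff ℝ 2 u →
      -- Wentzell–Robin boundary conditions (u ∈ D(Ã))
      deriv (fun σ => d σ * deriv u σ) 0 - b0 * deriv u 0 + c0 * u 0 = 0 →
      deriv (fun σ => d σ * deriv u σ) m + bm * deriv u m + cm * u m = 0 →
      -- dissipativity estimate ‖u‖_𝒳 ≤ ‖u − λ(Ã − ωI)u‖_𝒳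
      (∫ s in (0)..m, |u s|) + c₁ * |u 0| + c₂ * |u m|
        ≤ (∫ s in (0)..m, |u s - lam * (deriv (fun σ => d σ * deriv u σ) s
              - deriv (fun σ => γ σ * u σ) s - μ s * u s - ω * u s)|)
          + c₁ * |u 0 - lam * ((b0 - γ 0) * deriv u 0
              - (μ 0 + c0 + deriv γ 0) * u 0 - ω * u 0)|
          + c₂ * |u m - lam * ((-bm - γ m) * deriv u m
              - (μ m + cm + deriv γ m) * u m - ω * u m)| :=
  dissipativity_general m hm d γ μ hd hγ hdpos hμ hμpos b0 bm c0 cm c₁ c₂ hc₁ hc₂ hc₁pos hc₂pos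
end

section
/- Let λ > 0, ω ∈ ℝ sufficiently large, and suppose h ∈ 𝒳 is nonnegative and u ∈ D(Ã) solves u − λ(Ã − ωI)u = h, where inequality (negpart) holds: ‖u⁻‖₁ plus nonnegative boundary terms involving u(0), u(m) is bounded above by terms that are all nonpositive when h ≥ 0. Then u⁻ = 0 a.e., i.e., u ≥ 0. Consequently the resolvent R(λ, Ã − ωI) is a positive operator for λ large enough. -/
/-! A continuous `u` attains its minimum on `[0, m]` at some `s₀`, so it suffices to show
`0 ≤ u s₀`. Choosing `ω₀` so that `γ' + μ + ω ≥ 0` on `[0, m]`, the resolvent equation at `s₀`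
reads `u s₀ (1 + λ (γ' + μ + ω + c)) = h s₀ + λ R` with `c ∈ {0, c₀, c_m}`, where `R ≥ 0` by the
first- and second-order conditions for a minimum: `R = d u''` at an interior point
(where `u' = 0`), and `R = (b₀ - γ(0)) u'(0)`, resp. `R = -(γ(m) + b_m) u'(m)`, at an endpoint;
the signs of `b₀ - γ(0)` and `γ(m) + b_m` are those of `d(0)/(b₀ - γ(0))` and `d(m)/(γ(m) + b_m)`. -/

open Set Topology

theorem IsMinOn.deriv_nonneg_of_left {f : ℝ → ℝ} {a b : ℝ} (hab : a < b)
    (hmin : IsMinOn f (Icc a b) a) (hf : DifferentiableAt ℝ f a) : 0 ≤ deriv f a := by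
  have hcone : b - a ∈ posTangentConeAt (Icc a b) a :=
    sub_mem_posTangentConeAt_of_segment_subset (segment_eq_Icc hab.le).subset
  have := hmin.localize.hasFDerivWithinAt_nonneg hf.hasDerivAt.hasFDerivAt.hasFDerivWithinAt hcone
  simp only [ContinuousLinearMap.toSpanSingleton_apply, smul_eq_mul] at this
  exact nonneg_of_mul_nonneg_right this (sub_pos.2 hab)

theorem IsMinOn.deriv_nonpos_of_right {f : ℝ → ℝ} {a b : ℝ} (hab : a < b)
    (hmin : IsMinOn f (Icc a b) b) (hf : DifferentiableAt ℝ f b) : deriv f b ≤ 0 := by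
  have hcone : a - b ∈ posTangentConeAt (Icc a b) b :=
    sub_mem_posTangentConeAt_of_segment_subset (segment_eq_Icc' b a ▸ by simp [hab.le])
  have := hmin.localize.hasFDerivWithinAt_nonneg hf.hasDerivAt.hasFDerivAt.hasFDerivWithinAt hcone
  simp only [ContinuousLinearMap.toSpanSingleton_apply, smul_eq_mul] at this
  exact nonpos_of_mul_nonneg_right this (sub_neg.2 hab)

/-- If `f''(x) < 0` the second derivative test makes `x` also a local maximum, so `f` is locally
constant and `f''(x) = 0`. -/
theorem IsLocalMin.deriv_deriv_nonneg {f : ℝ → ℝ} {x : ℝ} (hmin : IsLocalMin f x)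
    (hf : ContinuousAt f x) : 0 ≤ deriv (deriv f) x := by
  by_contra! hneg
  have hmax := isLocalMax_of_deriv_deriv_neg hneg hmin.deriv_eq_zero hf
  have hconst : f =ᶠ[𝓝 x] fun _ => f x :=
    (hmin.and hmax).mono fun _ hy => le_antisymm hy.2 hy.1
  have hderiv : deriv f =ᶠ[𝓝 x] fun _ => 0 :=
    hconst.eventuallyEq_nhds.mono fun _ hy => by rw [hy.deriv_eq, deriv_const]
  rw [hderiv.deriv_eq, deriv_const] at hneg
  exact hneg.false

theorem nonneg_of_resolvent_eq {x R K h lam : ℝ} (hlam : 0 ≤ lam) (hR : 0 ≤ R) (hK : 0 ≤ K)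
    (hh : 0 ≤ h) (heq : x - lam * (R - K * x) = h) : 0 ≤ x := by
  have hx : x * (1 + lam * K) = h + lam * R := by linear_combination heq
  have hpos : 0 < 1 + lam * K := by positivity
  exact (mul_nonneg_iff_of_pos_right hpos).1 (hx ▸ by positivity)

theorem nonneg_of_resolvent_eq_of_isLocalMin {u d γ μ : ℝ → ℝ} {ω lam h s : ℝ}
    (hu : ContDiff ℝ 2 u) (hd : DifferentiableAt ℝ d s) (hγ : DifferentiableAt ℝ γ s)
    (hmin : IsLocalMin u s) (hds : 0 < d s) (hK : 0 ≤ deriv γ s + μ s + ω) (hlam : 0 ≤ lam)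
    (hh : 0 ≤ h)
    (heq : u s - lam * (deriv (fun σ => d σ * deriv u σ) s
      - deriv (fun σ => γ σ * u σ) s - μ s * u s - ω * u s) = h) : 0 ≤ u s := by
  have hu' : deriv u s = 0 := hmin.deriv_eq_zero
  have hu'' : DifferentiableAt ℝ (deriv u) s :=
    ((hu.iterate_deriv' 1 1).differentiable one_ne_zero).differentiableAt
  have hflux : deriv (fun σ => d σ * deriv u σ) s = d s * deriv (deriv u) s := by
    rw [deriv_fun_mul hd hu'', hu', mul_zero, zero_add]
  have hdrift : deriv (fun σ => γ σ * u σ) s = deriv γ s * u s := by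
    rw [deriv_fun_mul hγ (hu.differentiable two_ne_zero s), hu', mul_zero, add_zero]
  have hconv : 0 ≤ d s * deriv (deriv u) s :=
    mul_nonneg hds.le (hmin.deriv_deriv_nonneg hu.continuous.continuousAt)
  exact nonneg_of_resolvent_eq hlam hconv hK hh (by rw [← heq, hflux, hdrift]; ring)

theorem resolvent_positive_general (m : ℝ) (hm : 0 < m)
    (d γ μ : ℝ → ℝ) (hd : ContDiff ℝ 1 d) (hγ : ContDiff ℝ 1 γ)
    (hdpos : ∀ s ∈ Set.Icc (0:ℝ) m, 0 < d s)
    (hμ : Continuous μ)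
    (b0 bm c0 cm : ℝ) (hc0 : 0 ≤ c0) (hcm : 0 ≤ cm)
    (hc₁pos : 0 < d 0 / (b0 - γ 0)) (hc₂pos : 0 < d m / (γ m + bm)) :
    ∃ ω₀ : ℝ, ∀ ω : ℝ, ω₀ ≤ ω → ∀ lam : ℝ, 0 < lam →
      ∀ u h : ℝ → ℝ, ContDiff ℝ 2 u → Continuous h →
      -- h is nonnegative (in all components of 𝒳)
      (∀ s ∈ Set.Icc (0:ℝ) m, 0 ≤ h s) →
      -- u ∈ D(Ã): Wentzell–Robin boundary conditions
      deriv (fun σ => d σ * deriv u σ) 0 - b0 * deriv u 0 + c0 * u 0 = 0 →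
      deriv (fun σ => d σ * deriv u σ) m + bm * deriv u m + cm * u m = 0 →
      -- resolvent equation in the interior
      (∀ s ∈ Set.Ioo (0:ℝ) m,
        u s - lam * (deriv (fun σ => d σ * deriv u σ) s
          - deriv (fun σ => γ σ * u σ) s - μ s * u s - ω * u s) = h s) →
      -- resolvent equation in the two boundary components
      u 0 - lam * ((b0 - γ 0) * deriv u 0
        - (μ 0 + c0 + deriv γ 0) * u 0 - ω * u 0) = h 0 →
      u m - lam * ((-bm - γ m) * deriv u m
        - (μ m + cm + deriv γ m) * u m - ω * u m) = h m →
      -- conclusion: u ≥ 0, i.e. u⁻ = 0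
      ∀ s ∈ Set.Icc (0:ℝ) m, 0 ≤ u s := by
  have hb0 : 0 < b0 - γ 0 := (div_pos_iff_of_pos_left (hdpos 0 ⟨le_rfl, hm.le⟩)).1 hc₁pos
  have hbm : 0 < γ m + bm := (div_pos_iff_of_pos_left (hdpos m ⟨hm.le, le_rfl⟩)).1 hc₂pos
  have hγ' : Continuous (deriv γ) := hγ.continuous_deriv le_rfl
  obtain ⟨c, hc⟩ := isCompact_Icc.bddBelow_image (hγ'.add hμ).continuousOn (K := Icc 0 m)
  refine ⟨-c, fun ω hω lam hlam u h hu _ hh _ _ heq heq0 heqm => ?_⟩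
  have hK : ∀ s ∈ Icc 0 m, 0 ≤ deriv γ s + μ s + ω := fun s hs => by
    have := hc (mem_image_of_mem _ hs)
    simp only [Pi.add_apply] at this
    linarith
  obtain ⟨s₀, hs₀, hmin⟩ := isCompact_Icc.exists_isMinOn (nonempty_Icc.2 hm.le)
    hu.continuous.continuousOn
  suffices 0 ≤ u s₀ from fun s hs => this.trans (hmin hs)
  obtain rfl | hs₀l := hs₀.1.eq_or_lt
  · have hu'0 := hmin.deriv_nonneg_of_left hm (hu.differentiable two_ne_zero _)
    exact nonneg_of_resolvent_eq (K := μ 0 + c0 + deriv γ 0 + ω) hlam.le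
      (mul_nonneg hb0.le hu'0) (by linarith [hK 0 hs₀]) (hh 0 hs₀) (by linear_combination heq0)
  obtain rfl | hs₀r := hs₀.2.eq_or_lt
  · have hu'm := hmin.deriv_nonpos_of_right hm (hu.differentiable two_ne_zero _)
    exact nonneg_of_resolvent_eq (R := (-bm - γ s₀) * deriv u s₀)
      (K := μ s₀ + cm + deriv γ s₀ + ω) hlam.le (mul_nonneg_of_nonpos_of_nonpos (by linarith) hu'm)
      (by linarith [hK _ hs₀]) (hh _ hs₀) (by linear_combination heqm)
  exact nonneg_of_resolvent_eq_of_isLocalMin hu (hd.differentiable one_ne_zero _)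
    (hγ.differentiable one_ne_zero _) (hmin.isLocalMin (Icc_mem_nhds hs₀l hs₀r))
    (hdpos _ hs₀) (hK _ hs₀) hlam.le (hh _ hs₀) (heq _ ⟨hs₀l, hs₀r⟩)

/-- Positivity of the resolvent: for `ω` sufficiently large and any `λ > 0`, if
`h ∈ 𝒳` is nonnegative and `u ∈ D(Ã)` solves the resolvent equation
`u − λ(Ã − ωI)u = h` (in the interior and at both boundary components), then `u ≥ 0`
on `[0,m]`; i.e. `R(λ, Ã − ωI)` is a positive operator. -/
theorem resolvent_positive (m : ℝ) (hm : 0 < m)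
    (d γ μ : ℝ → ℝ) (hd : ContDiff ℝ 1 d) (hγ : ContDiff ℝ 1 γ)
    (hdpos : ∀ s ∈ Set.Icc (0:ℝ) m, 0 < d s)
    (hμ : Continuous μ) (hμpos : ∀ s ∈ Set.Icc (0:ℝ) m, 0 ≤ μ s)
    (b0 bm c0 cm : ℝ) (hb0 : 0 < b0) (hbm : 0 < bm) (hc0 : 0 ≤ c0) (hcm : 0 ≤ cm)
    (hc₁pos : 0 < d 0 / (b0 - γ 0)) (hc₂pos : 0 < d m / (γ m + bm)) :
    ∃ ω₀ : ℝ, ∀ ω : ℝ, ω₀ ≤ ω → ∀ lam : ℝ, 0 < lam →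
      ∀ u h : ℝ → ℝ, ContDiff ℝ 2 u → Continuous h →
      -- h is nonnegative (in all components of 𝒳)
      (∀ s ∈ Set.Icc (0:ℝ) m, 0 ≤ h s) →
      -- u ∈ D(Ã): Wentzell–Robin boundary conditions
      deriv (fun σ => d σ * deriv u σ) 0 - b0 * deriv u 0 + c0 * u 0 = 0 →
      deriv (fun σ => d σ * deriv u σ) m + bm * deriv u m + cm * u m = 0 →
      -- resolvent equation in the interior
      (∀ s ∈ Set.Ioo (0:ℝ) m,
        u s - lam * (deriv (fun σ => d σ * deriv u σ) s
          - deriv (fun σ => γ σ * u σ) s - μ s * u s - ω * u s) = h s) →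
      -- resolvent equation in the two boundary components
      u 0 - lam * ((b0 - γ 0) * deriv u 0
        - (μ 0 + c0 + deriv γ 0) * u 0 - ω * u 0) = h 0 →
      u m - lam * ((-bm - γ m) * deriv u m
        - (μ m + cm + deriv γ m) * u m - ω * u m) = h m →
      -- conclusion: u ≥ 0, i.e. u⁻ = 0
      ∀ s ∈ Set.Icc (0:ℝ) m, 0 ≤ u s :=
  resolvent_positive_general m hm d γ μ hd hγ hdpos hμ b0 bm c0 cm hc0 hcm hc₁pos hc₂pos
end
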